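/- arXiv:1011.3424 — 4 statements merged into one kernel-verified Lean document; each statement's English description precedes it below -/
import Mathlib

section
/- If the set of integers ℤ is diophantine (existentially definable) in ℚ in the language of rings, then ℤ is also universally definable in ℚ, i.e., definable by a first-order formula of the form ∀y₁...∀yₙ φ(t, y₁,...,yₙ) with φ quantifier-free. -/
/-!
An integer `t` has no presentation `m = t * n` with `a * m + b * n = 1` and `n ≠ ±1`, since such
an `n` would divide `1`; a non-integer `t` has one, namely `t = num / den`. Hence `ℚ ∖ ℤ` is the
projection of a quantifier-free condition on `(t, m, n, a, b)` together with the integrality of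
`m, n, a, b`. If `ℤ` is existentially definable, so is this projection, and negating its defining
existential formula gives a universal formula defining `ℤ`.
-/

open FirstOrder Language

noncomputable instance : FirstOrder.Ring.CompatibleRing ℚ := FirstOrder.Ring.compatibleRingOfRing ℚ

namespace FirstOrder.Language

variable {L : Language} {M : Type*} [L.Structure M] {α : Type*}

theorem BoundedFormula.IsQF.toFormula {n : ℕ} {φ : L.BoundedFormula α n} (h : φ.IsQF) :
    φ.toFormula.IsQF := by
  induction h with
  | falsum => exact isQF_bot
  | of_isAtomic h =>
    cases h with
    | equal t₁ t₂ => exact (IsAtomic.equal _ _).isQF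
    | rel R ts => exact (IsAtomic.rel _ _).isQF
  | imp _ _ ih₁ ih₂ => exact ih₁.imp ih₂

theorem BoundedFormula.IsQF.exists_alls_eq_iAlls {β : Type*} [Finite β] {φ : L.Formula (α ⊕ β)}
    (hφ : φ.IsQF) :
    ∃ (n : ℕ) (ψ : L.BoundedFormula α n), ψ.IsQF ∧ ψ.alls = φ.iAlls β := by
  refine ⟨_, _, ?_, rfl⟩
  exact hφ.relabel _

variable (L) in
def ExistentiallyDefinable (s : Set (α → M)) : Prop :=
  ∃ (β : Type) (_ : Finite β) (φ : L.Formula (α ⊕ β)), φ.IsQF ∧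
    s = {v | ∃ x : β → M, φ.Realize (Sum.elim v x)}

theorem existentiallyDefinable_of_isQF {φ : L.Formula α} (hφ : φ.IsQF) :
    ExistentiallyDefinable L {v : α → M | φ.Realize v} := by
  refine ⟨Empty, inferInstance, φ.relabel Sum.inl, hφ.relabel _, ?_⟩
  ext v
  simp [Sum.elim_comp_inl]

theorem existentiallyDefinable_exs {n : ℕ} {ψ : L.BoundedFormula α n} (hψ : ψ.IsQF) :
    ExistentiallyDefinable L {v : α → M | ψ.exs.Realize v} := by
  refine ⟨Fin n, inferInstance, ψ.toFormula, hψ.toFormula, ?_⟩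
  ext v
  simp

namespace ExistentiallyDefinable

theorem inter {s t : Set (α → M)} (hs : ExistentiallyDefinable L s)
    (ht : ExistentiallyDefinable L t) : ExistentiallyDefinable L (s ∩ t) := by
  obtain ⟨β, _, φ, hφ, rfl⟩ := hs
  obtain ⟨γ, _, θ, hθ, rfl⟩ := ht
  refine ⟨β ⊕ γ, inferInstance,
    φ.relabel (Sum.map id Sum.inl) ⊓ θ.relabel (Sum.map id Sum.inr),
    (hφ.relabel _).inf (hθ.relabel _), ?_⟩
  ext v
  simp only [Set.mem_inter_iff, Set.mem_ofPred_eq, Formula.realize_inf, Formula.realize_relabel,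
    Sum.elim_comp_map, Function.comp_id]
  exact ⟨fun ⟨⟨x, hx⟩, ⟨y, hy⟩⟩ => ⟨Sum.elim x y, by simpa using hx, by simpa using hy⟩,
    fun ⟨z, hx, hy⟩ => ⟨⟨_, hx⟩, ⟨_, hy⟩⟩⟩

theorem preimage_comp {β : Type*} (f : α → β) {s : Set (α → M)}
    (h : ExistentiallyDefinable L s) :
    ExistentiallyDefinable L ((fun g : β → M => g ∘ f) ⁻¹' s) := by
  obtain ⟨γ, _, φ, hφ, rfl⟩ := h
  refine ⟨γ, inferInstance, φ.relabel (Sum.map f id), hφ.relabel _, ?_⟩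
  ext v
  simp [Sum.elim_comp_map]

theorem exists_of_finite {γ : Type} [Finite γ] {s : Set (α ⊕ γ → M)}
    (h : ExistentiallyDefinable L s) :
    ExistentiallyDefinable L {v : α → M | ∃ u : γ → M, Sum.elim v u ∈ s} := by
  obtain ⟨β, _, φ, hφ, rfl⟩ := h
  refine ⟨γ ⊕ β, inferInstance, φ.relabel (Equiv.sumAssoc α γ β), hφ.relabel _, ?_⟩
  ext v
  simp only [Set.mem_ofPred_eq, Formula.realize_relabel]
  have hassoc (u : γ → M) (y : β → M) :
      Sum.elim v (Sum.elim u y) ∘ Equiv.sumAssoc α γ β = Sum.elim (Sum.elim v u) y := by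
    ext ((a | c) | b) <;> rfl
  exact ⟨fun ⟨u, y, h⟩ => ⟨Sum.elim u y, by rwa [hassoc]⟩,
    fun ⟨x, h⟩ => ⟨x ∘ Sum.inl, x ∘ Sum.inr, by rwa [← hassoc, Sum.elim_comp_inl_inr]⟩⟩

theorem exists_isQF_alls_compl {s : Set (α → M)} (h : ExistentiallyDefinable L s) :
    ∃ (n : ℕ) (ψ : L.BoundedFormula α n), ψ.IsQF ∧ ∀ v, v ∉ s ↔ ψ.alls.Realize v := by
  obtain ⟨β, _, φ, hφ, rfl⟩ := h
  obtain ⟨n, ψ, hψ, hψφ⟩ := hφ.not.exists_alls_eq_iAlls (β := β)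
  refine ⟨n, ψ, hψ, fun v => ?_⟩
  simp [hψφ, Formula.realize_iAlls]

end ExistentiallyDefinable

theorem existentiallyDefinable_iInter_of_finite {ι : Type*} [Finite ι] {s : ι → Set (α → M)}
    (hs : ∀ i, ExistentiallyDefinable L (s i)) : ExistentiallyDefinable L (⋂ i, s i) := by
  have := Fintype.ofFinite ι
  classical
  suffices ∀ t : Finset ι, ExistentiallyDefinable L (⋂ i ∈ t, s i) by simpa using this .univ
  refine Finset.induction ?_ fun i t _ h => ?_
  · simpa using existentiallyDefinable_of_isQF (M := M) (BoundedFormula.IsQF.top (L := L) (α := α))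
  · simpa using (hs i).inter h

end FirstOrder.Language

theorem Rat.exists_intCast_eq_iff_not_exists_bezout (t : ℚ) :
    (∃ z : ℤ, (z : ℚ) = t) ↔
      ¬ ∃ m n a b : ℤ, a * m + b * n = 1 ∧ (m : ℚ) = t * n ∧ n ≠ 1 ∧ n ≠ -1 := by
  constructor
  · rintro ⟨z, rfl⟩ ⟨m, n, a, b, hbezout, hmn, hn₁, hn₂⟩
    have hm : m = z * n := by exact_mod_cast hmn
    have hunit : n * (a * z + b) = 1 := by linear_combination hbezout - a * hm
    rcases Int.eq_one_or_neg_one_of_mul_eq_one hunit with h | h <;> contradiction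
  · intro hnone
    by_contra hnonint
    obtain ⟨a, b, hab⟩ := Rat.isCoprime_num_den t
    refine hnone ⟨t.num, t.den, a, b, hab, ?_, fun hden => hnonint ⟨t.num, ?_⟩, by omega⟩
    · exact_mod_cast (Rat.mul_den_eq_num t).symm
    · exact_mod_cast Rat.coe_int_num_of_den_eq_one (by exact_mod_cast hden)

def reducedFractionFormula : Language.ring.Formula (Fin 1 ⊕ Fin 4) :=
  let t := Term.var (Sum.inl 0)
  let m := Term.var (Sum.inr 0)
  let n := Term.var (Sum.inr 1)
  let a := Term.var (Sum.inr 2)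
  let b := Term.var (Sum.inr 3)
  (a * m + b * n).equal 1 ⊓ m.equal (t * n) ⊓ ∼(n.equal 1) ⊓ ∼(n.equal (-1))

theorem isQF_reducedFractionFormula : reducedFractionFormula.IsQF :=
  (((BoundedFormula.IsAtomic.equal _ _).isQF.inf (BoundedFormula.IsAtomic.equal _ _).isQF).inf
    (BoundedFormula.IsAtomic.equal _ _).isQF.not).inf (BoundedFormula.IsAtomic.equal _ _).isQF.not

theorem realize_reducedFractionFormula (t : Fin 1 → ℚ) (x : Fin 4 → ℚ) :
    reducedFractionFormula.Realize (Sum.elim t x) ↔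
      x 2 * x 0 + x 3 * x 1 = 1 ∧ x 0 = t 0 * x 1 ∧ x 1 ≠ 1 ∧ x 1 ≠ -1 := by
  simp [reducedFractionFormula, and_assoc]

theorem existentiallyDefinable_notMem_range_intCast
    (hℤ : ExistentiallyDefinable Language.ring {v : Fin 1 → ℚ | v 0 ∈ Set.range ((↑) : ℤ → ℚ)}) :
    ExistentiallyDefinable Language.ring {v : Fin 1 → ℚ | v 0 ∉ Set.range ((↑) : ℤ → ℚ)} := by
  have hcoords (i : Fin 4) : ExistentiallyDefinable Language.ring
      {w : Fin 1 ⊕ Fin 4 → ℚ | w (.inr i) ∈ Set.range ((↑) : ℤ → ℚ)} :=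
    hℤ.preimage_comp fun _ => Sum.inr i
  convert ((existentiallyDefinable_iInter_of_finite hcoords).inter
    (existentiallyDefinable_of_isQF isQF_reducedFractionFormula)).exists_of_finite using 1
  ext v
  simp only [Set.mem_ofPred_eq, Set.mem_range, Set.mem_inter_iff, Set.mem_iInter,
    Sum.elim_inr, realize_reducedFractionFormula]
  rw [Rat.exists_intCast_eq_iff_not_exists_bezout, not_not]
  constructor
  · rintro ⟨m, n, a, b, h⟩
    refine ⟨fun i => (![m, n, a, b] i : ℚ), fun i => ⟨_, rfl⟩, ?_⟩
    simp only [Matrix.cons_val, Matrix.cons_val_zero, Matrix.cons_val_one]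
    exact_mod_cast h
  · rintro ⟨x, hx, h⟩
    choose y hy using hx
    simp only [← hy] at h
    exact ⟨y 0, y 1, y 2, y 3, by exact_mod_cast h⟩

/-- If ℤ is existentially definable in ℚ in the language of rings, then ℤ is
universally definable in ℚ. -/
theorem int_universally_definable_of_existentially_definable
    (hex : ∃ (n : ℕ) (ψ : Language.ring.BoundedFormula (Fin 1) n), ψ.IsQF ∧
      ∀ t : ℚ, (∃ m : ℤ, (m : ℚ) = t) ↔ ψ.exs.Realize (fun _ => t)) :
    ∃ (n : ℕ) (ψ : Language.ring.BoundedFormula (Fin 1) n), ψ.IsQF ∧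
      ∀ t : ℚ, (∃ m : ℤ, (m : ℚ) = t) ↔ ψ.alls.Realize (fun _ => t) := by
  obtain ⟨k, ψ, hψ, hψℤ⟩ := hex
  have hℤ : ExistentiallyDefinable Language.ring
      {v : Fin 1 → ℚ | v 0 ∈ Set.range ((↑) : ℤ → ℚ)} := by
    convert existentiallyDefinable_exs hψ using 1
    ext v
    rw [eq_const_of_unique v]
    exact hψℤ _
  obtain ⟨n, φ, hφ, hφℤ⟩ :=
    (existentiallyDefinable_notMem_range_intCast hℤ).exists_isQF_alls_compl
  exact ⟨n, φ, hφ, fun t => by simpa using hφℤ fun _ => t⟩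
end

section
/- Let p₁,...,pₙ be distinct primes ≡ 1 mod 8, q₁,...,q_s distinct primes ≡ 3 mod 8 (s odd, distinct from the pᵢ), and set p = p₁⋯pₙ. Suppose for each k ≤ s the number n_k := #{i ≤ n | (q_k/p_i) = −1} is odd. Then for any product q of q₁,...,q_s with some of p₁,...,pₘ (m ≤ n) and further distinct primes r₁,...,r_t ≡ 1 mod 8, at least one of the following holds: (1) there exists j ≤ m with s_j + t_j + n'_j odd; (2) there exists i with m < i ≤ n and s_i + m_i + t_i odd; (3) there exists l ≤ t with n*_l odd; where s_j = #{k ≤ s | (q_k/p_j) = −1}, t_j = #{l ≤ t | (r_l/p_j) = −1}, n'_j = #{i > m | (p_j/p_i) = −1}, m_i = #{j ≤ m | (p_j/p_i) = −1}, n*_l = #{i ≤ n | (r_l/p_i) = −1}. -/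
/-!
Every count is an incidence count of a relation, so its total over all `p i` can be computed
from the other side: summed over `i`, the `q`-counts give `∑ₖ nₖ ≡ s ≡ 1` and the `r`-counts give
`∑ₗ n*ₗ`, which is even unless (3) holds. The counts `n'ⱼ` (`j < m`) and `mᵢ` (`i ≥ m`) both
count the pairs `(j, i)` across the cut at `m` with `(pⱼ/pᵢ) = -1`, so together they contribute
an even number. Hence the quantities in (1) and (2) have odd total, and one of them is odd.
-/

/-- `a` is a quadratic non-residue modulo `p`. -/
def NR (a p : ℕ) : Prop := ¬ IsSquare ((a : ZMod p))

open Finset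

section DoubleCounting

variable {ι κ : Type*} [Fintype ι] [Fintype κ] (R : κ → ι → Prop) [∀ k i, Decidable (R k i)]

theorem sum_card_filter_comm : ∑ i, #{k | R k i} = ∑ k, #{i | R k i} :=
  (sum_card_bipartiteAbove_eq_sum_card_bipartiteBelow R).symm

theorem odd_sum_card_filter (hκ : Odd (Fintype.card κ)) (hR : ∀ k, Odd #{i | R k i}) :
    Odd (∑ i, #{k | R k i}) := by
  rw [sum_card_filter_comm, odd_sum_iff_odd_card_odd, filter_true_of_mem fun k _ => hR k]
  exact hκ

theorem even_sum_card_filter (hR : ∀ k, Even #{i | R k i}) : Even (∑ i, #{k | R k i}) := by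
  rw [sum_card_filter_comm]
  exact even_sum _ fun k _ => hR k

end DoubleCounting

theorem sum_card_filter_cut {ι : Type*} [Fintype ι] (P : ι → Prop) [DecidablePred P]
    (R : ι → ι → Prop) [∀ j i, Decidable (R j i)] :
    ∑ j with P j, #{i | ¬ P i ∧ R j i} = ∑ i with ¬ P i, #{j | P j ∧ R j i} := by
  simpa only [bipartiteAbove, bipartiteBelow, filter_filter, and_comm]
    using sum_card_bipartiteAbove_eq_sum_card_bipartiteBelow (s := {j | P j}) (t := {i | ¬ P i}) R

theorem exists_odd_count_across_cut {ι κ ρ : Type*} [Fintype ι] [Fintype κ] [Fintype ρ]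
    (P : ι → Prop) [DecidablePred P]
    (Q : κ → ι → Prop) (S : ρ → ι → Prop) (R : ι → ι → Prop)
    [∀ k i, Decidable (Q k i)] [∀ l i, Decidable (S l i)] [∀ j i, Decidable (R j i)]
    (hκ : Odd (Fintype.card κ)) (hQ : ∀ k, Odd #{i | Q k i}) (hS : ∀ l, Even #{i | S l i}) :
    (∃ j, P j ∧ Odd (#{k | Q k j} + #{l | S l j} + #{i | ¬ P i ∧ R j i})) ∨
    (∃ i, ¬ P i ∧ Odd (#{k | Q k i} + #{j | P j ∧ R j i} + #{l | S l i})) := by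
  set A := fun i => #{k | Q k i}
  set B := fun i => #{l | S l i}
  set g := fun i =>
    if P i then A i + B i + #{i' | ¬ P i' ∧ R i i'} else A i + #{j | P j ∧ R j i} + B i
  have hg : ∑ i, g i = ∑ i, A i + ∑ i, B i + 2 * ∑ j with P j, #{i | ¬ P i ∧ R j i} := by
    rw [sum_ite, sum_add_distrib, sum_add_distrib, sum_add_distrib, sum_add_distrib,
      ← sum_card_filter_cut, ← sum_filter_add_sum_filter_not univ P A,
      ← sum_filter_add_sum_filter_not univ P B]
    ring
  have hodd : Odd (∑ i, g i) := by
    rw [hg, add_assoc]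
    exact (odd_sum_card_filter Q hκ hQ).add_even
      ((even_sum_card_filter S hS).add (even_two_mul _))
  obtain ⟨i, -, hi⟩ : ∃ i ∈ univ, Odd (g i) := by
    by_contra! h
    exact Nat.not_even_iff_odd.mpr hodd (even_sum _ fun i hi => Nat.not_odd_iff_even.mp (h i hi))
  by_cases hP : P i
  · exact .inl ⟨i, hP, by simpa [g, hP] using hi⟩
  · exact .inr ⟨i, hP, by simpa [g, hP] using hi⟩

theorem parity_argument_general (n s t m : ℕ) (hs : Odd s)
    (p : Fin n → ℕ) (q : Fin s → ℕ) (r : Fin t → ℕ)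
    (hodd : ∀ k : Fin s, Odd (Nat.card {i : Fin n // NR (q k) (p i)})) :
    (∃ j : Fin n, (j : ℕ) < m ∧
      Odd (Nat.card {k : Fin s // NR (q k) (p j)} +
        Nat.card {l : Fin t // NR (r l) (p j)} +
        Nat.card {i : Fin n // m ≤ (i : ℕ) ∧ NR (p j) (p i)})) ∨
    (∃ i : Fin n, m ≤ (i : ℕ) ∧
      Odd (Nat.card {k : Fin s // NR (q k) (p i)} +
        Nat.card {j : Fin n // (j : ℕ) < m ∧ NR (p j) (p i)} +
        Nat.card {l : Fin t // NR (r l) (p i)})) ∨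
    (∃ l : Fin t, Odd (Nat.card {i : Fin n // NR (r l) (p i)})) := by
  classical
  simp only [Nat.card_eq_fintype_card, Fintype.card_subtype, ← not_lt] at hodd ⊢
  rw [← or_assoc, or_iff_not_imp_right]
  intro hr
  simp only [not_exists, Nat.not_odd_iff_even] at hr
  exact exists_odd_count_across_cut (fun i : Fin n => (i : ℕ) < m)
    (fun k i => NR (q k) (p i)) (fun l i => NR (r l) (p i)) (fun j i => NR (p j) (p i))
    (by simpa using hs) hodd hr

/-- The combinatorial parity argument at the heart of Proposition 10:
`p 0, …, p (n-1)` are distinct primes `≡ 1 mod 8`, `q 0, …, q (s-1)` distinct primes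
`≡ 3 mod 8` (`s` odd), `r 0, …, r (t-1)` further distinct primes `≡ 1 mod 8`, all
families disjoint, `m ≤ n`, and each `n_k = #{i | (q k / p i) = -1}` is odd.  Then one
of the three listed parity conditions holds. -/
theorem parity_argument (n s t m : ℕ) (hm : m ≤ n) (hs : Odd s)
    (p : Fin n → ℕ) (q : Fin s → ℕ) (r : Fin t → ℕ)
    (hp : ∀ i, (p i).Prime ∧ p i % 8 = 1)
    (hq : ∀ k, (q k).Prime ∧ q k % 8 = 3)
    (hr : ∀ l, (r l).Prime ∧ r l % 8 = 1)
    (hpinj : Function.Injective p) (hqinj : Function.Injective q)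
    (hrinj : Function.Injective r)
    (hpq : ∀ i k, p i ≠ q k) (hpr : ∀ i l, p i ≠ r l) (hqr : ∀ k l, q k ≠ r l)
    (hodd : ∀ k : Fin s, Odd (Nat.card {i : Fin n // NR (q k) (p i)})) :
    (∃ j : Fin n, (j : ℕ) < m ∧
      Odd (Nat.card {k : Fin s // NR (q k) (p j)} +
        Nat.card {l : Fin t // NR (r l) (p j)} +
        Nat.card {i : Fin n // m ≤ (i : ℕ) ∧ NR (p j) (p i)})) ∨
    (∃ i : Fin n, m ≤ (i : ℕ) ∧
      Odd (Nat.card {k : Fin s // NR (q k) (p i)} +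
        Nat.card {j : Fin n // (j : ℕ) < m ∧ NR (p j) (p i)} +
        Nat.card {l : Fin t // NR (r l) (p i)})) ∨
    (∃ l : Fin t, Odd (Nat.card {i : Fin n // NR (r l) (p i)})) :=
  parity_argument_general n s t m hs p q r hodd
end

section
/- Let R = ⋂_{l ∈ Δ} ℤ_{(l)} for a finite nonempty set Δ of primes, let J(R) be its Jacobson radical, and define R̃ = {x ∈ ℚ | ¬∃y ∈ J(R), xy = 1}. Then R̃ = ⋃_{l ∈ Δ} ℤ_{(l)}. In particular, if R = ℤ_{(p)} for a single prime p, then R̃ = R. -/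
/-!
An element `y ∈ R` lies in `J(R)` iff `l ∣ num y` for every `l ∈ Δ`: the kernel of the reduction
`R → 𝔽_l` is maximal, and conversely for such `y` every `1 + y z` reduces to `1` modulo each
`l ∈ Δ`, so it is a unit of `R`. As `num (x⁻¹) = ± den x`, a rational `x` has an inverse in `J(R)`
exactly when every `l ∈ Δ` divides `den x`.
-/

/-- The semilocal subring `R = ⋂_{l ∈ Δ} ℤ_{(l)}` of ℚ, for a finite set `Δ` of primes. -/
def locSubring (Δ : Finset ℕ) (hΔ : ∀ l ∈ Δ, l.Prime) : Subring ℚ where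
  carrier := {x : ℚ | ∀ l ∈ Δ, ¬ (l ∣ x.den)}
  one_mem' := by
    intro l hl h
    rw [Rat.den_one, Nat.dvd_one] at h
    exact (hΔ l hl).one_lt.ne' h
  zero_mem' := by
    intro l hl h
    rw [Rat.den_zero, Nat.dvd_one] at h
    exact (hΔ l hl).one_lt.ne' h
  mul_mem' := by
    intro a b ha hb l hl h
    rcases ((hΔ l hl).dvd_mul).mp (h.trans (Rat.mul_den_dvd a b)) with h' | h'
    · exact ha l hl h'
    · exact hb l hl h'
  add_mem' := by
    intro a b ha hb l hl h
    rcases ((hΔ l hl).dvd_mul).mp (h.trans (Rat.add_den_dvd a b)) with h' | h'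
    · exact ha l hl h'
    · exact hb l hl h'
  neg_mem' := by
    intro a ha l hl h
    rw [Rat.den_neg_eq_den] at h
    exact ha l hl h

/-- The Jacobson radical of `R = ⋂_{l ∈ Δ} ℤ_{(l)}`, viewed as a subset of ℚ. -/
def Jset (Δ : Finset ℕ) (hΔ : ∀ l ∈ Δ, l.Prime) : Set ℚ :=
  {x : ℚ | ∃ h : x ∈ locSubring Δ hΔ,
    (⟨x, h⟩ : locSubring Δ hΔ) ∈ Ideal.jacobson (⊥ : Ideal (locSubring Δ hΔ))}

theorem Rat.not_dvd_den_of_dvd_num {l : ℕ} (hl : l.Prime) {x : ℚ} (h : l ∣ x.num.natAbs) :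
    ¬ l ∣ x.den := fun h' => hl.one_lt.ne' (Nat.eq_one_of_dvd_coprimes x.reduced h h')

theorem Rat.natAbs_num_inv {x : ℚ} (hx : x ≠ 0) : x⁻¹.num.natAbs = x.den := by
  simpa using (Rat.den_inv_of_ne_zero (inv_ne_zero hx)).symm

theorem Rat.cast_zmod_eq_zero_iff {l : ℕ} [Fact l.Prime] {x : ℚ} (hx : ¬ l ∣ x.den) :
    (x : ZMod l) = 0 ↔ l ∣ x.num.natAbs := by
  rw [Rat.cast_def, div_eq_zero_iff, ZMod.intCast_zmod_eq_zero_iff_dvd, Int.natCast_dvd,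
    ZMod.natCast_eq_zero_iff, or_iff_left hx]

section

variable {Δ : Finset ℕ} {hΔ : ∀ l ∈ Δ, l.Prime}

theorem mem_locSubring {x : ℚ} : x ∈ locSubring Δ hΔ ↔ ∀ l ∈ Δ, ¬ l ∣ x.den := Iff.rfl

theorem natCast_den_ne_zero_of_mem {l : ℕ} (hl : l ∈ Δ) (x : locSubring Δ hΔ) :
    ((x : ℚ).den : ZMod l) ≠ 0 := by
  rw [Ne, ZMod.natCast_eq_zero_iff]
  exact x.2 l hl

def reduceMod {l : ℕ} [Fact l.Prime] (hl : l ∈ Δ) : locSubring Δ hΔ →+* ZMod l where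
  toFun x := ((x : ℚ) : ZMod l)
  map_one' := by simp
  map_zero' := by simp
  map_mul' x y :=
    Rat.cast_mul_of_ne_zero (natCast_den_ne_zero_of_mem hl x) (natCast_den_ne_zero_of_mem hl y)
  map_add' x y :=
    Rat.cast_add_of_ne_zero (natCast_den_ne_zero_of_mem hl x) (natCast_den_ne_zero_of_mem hl y)

theorem reduceMod_eq_zero_iff {l : ℕ} [Fact l.Prime] (hl : l ∈ Δ) (x : locSubring Δ hΔ) :
    reduceMod hl x = 0 ↔ l ∣ (x : ℚ).num.natAbs :=
  Rat.cast_zmod_eq_zero_iff (x.2 l hl)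

theorem reduceMod_surjective {l : ℕ} [Fact l.Prime] (hl : l ∈ Δ) :
    Function.Surjective (reduceMod (hΔ := hΔ) hl) :=
  fun z => ⟨z.val, by simp⟩

theorem jacobson_bot_le_ker_reduceMod {l : ℕ} [Fact l.Prime] (hl : l ∈ Δ) :
    Ideal.jacobson (⊥ : Ideal (locSubring Δ hΔ)) ≤ RingHom.ker (reduceMod hl) :=
  sInf_le ⟨bot_le, RingHom.ker_isMaximal_of_surjective _ (reduceMod_surjective hl)⟩

theorem isUnit_of_forall_not_dvd_num (hne : Δ.Nonempty) (u : locSubring Δ hΔ)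
    (hu : ∀ l ∈ Δ, ¬ l ∣ (u : ℚ).num.natAbs) : IsUnit u := by
  obtain ⟨l₀, hl₀⟩ := hne
  have hu0 : (u : ℚ) ≠ 0 := fun h => hu l₀ hl₀ (by simp [h])
  have hinv : (u : ℚ)⁻¹ ∈ locSubring Δ hΔ := by
    rw [mem_locSubring, Rat.den_inv_of_ne_zero hu0]
    exact hu
  exact IsUnit.of_mul_eq_one ⟨_, hinv⟩ (Subtype.ext (mul_inv_cancel₀ hu0))

theorem mem_jacobson_bot_iff (hne : Δ.Nonempty) (y : locSubring Δ hΔ) :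
    y ∈ Ideal.jacobson (⊥ : Ideal (locSubring Δ hΔ)) ↔ ∀ l ∈ Δ, l ∣ (y : ℚ).num.natAbs := by
  constructor
  · intro hy l hl
    have : Fact l.Prime := ⟨hΔ l hl⟩
    exact (reduceMod_eq_zero_iff hl y).1 (jacobson_bot_le_ker_reduceMod hl hy)
  · intro hy
    rw [Ideal.mem_jacobson_bot]
    refine fun z => isUnit_of_forall_not_dvd_num hne _ fun l hl => ?_
    have : Fact l.Prime := ⟨hΔ l hl⟩
    rw [← reduceMod_eq_zero_iff hl, map_add, map_mul, (reduceMod_eq_zero_iff hl y).2 (hy l hl)]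
    simp

theorem mem_Jset_iff (hne : Δ.Nonempty) (y : ℚ) :
    y ∈ Jset Δ hΔ ↔ ∀ l ∈ Δ, l ∣ y.num.natAbs :=
  ⟨fun ⟨_, hJ⟩ => (mem_jacobson_bot_iff hne _).1 hJ, fun h =>
    ⟨fun l hl => Rat.not_dvd_den_of_dvd_num (hΔ l hl) (h l hl), (mem_jacobson_bot_iff hne _).2 h⟩⟩

theorem exists_mem_Jset_mul_eq_one_iff (hne : Δ.Nonempty) (x : ℚ) :
    (∃ y ∈ Jset Δ hΔ, x * y = 1) ↔ ∀ l ∈ Δ, l ∣ x.den := by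
  constructor
  · rintro ⟨y, hy, hxy⟩
    rw [eq_inv_of_mul_eq_one_right hxy, mem_Jset_iff hne] at hy
    simpa only [Rat.natAbs_num_inv (left_ne_zero_of_mul_eq_one hxy)] using hy
  · intro h
    obtain ⟨l₀, hl₀⟩ := hne
    have hx : x ≠ 0 := by
      rintro rfl
      exact (hΔ l₀ hl₀).one_lt.ne' (Nat.dvd_one.1 (h l₀ hl₀))
    refine ⟨x⁻¹, (mem_Jset_iff ⟨l₀, hl₀⟩ _).2 ?_, mul_inv_cancel₀ hx⟩
    simpa only [Rat.natAbs_num_inv hx] using h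

end

/-- For `R = ⋂_{l ∈ Δ} ℤ_{(l)}` (`Δ` finite nonempty) and
`R̃ = {x ∈ ℚ | ¬∃ y ∈ J(R), xy = 1}`, one has `R̃ = ⋃_{l ∈ Δ} ℤ_{(l)}`; in particular
for `Δ = {p}` a single prime, `R̃ = R = ℤ_{(p)}`. -/
theorem Rtilde_eq_union (Δ : Finset ℕ) (hΔ : ∀ l ∈ Δ, l.Prime) (hne : Δ.Nonempty) :
    ({x : ℚ | ¬ ∃ y ∈ Jset Δ hΔ, x * y = 1} = {x : ℚ | ∃ l ∈ Δ, ¬ (l ∣ x.den)}) ∧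
    (∀ (p : ℕ) (hp : p.Prime),
      {x : ℚ | ¬ ∃ y ∈ Jset {p} (by simpa using hp), x * y = 1} =
        {x : ℚ | ¬ (p ∣ x.den)}) := by
  refine ⟨?_, fun p hp => ?_⟩
  · ext x
    simp [exists_mem_Jset_mul_eq_one_iff hne]
  · ext x
    simp [exists_mem_Jset_mul_eq_one_iff (Finset.singleton_nonempty p)]
end

section
/- For every pair (a,b) from the list {(2,3),(2,5),(2,6),(2,10),(3,3),(3,10),(3,15),(5,6),(5,10),(5,30),(6,6),(6,15),(10,30),(15,15),(15,30),(30,30)}, one has 4 + 8ℤ₂ ⊆ S_{a,b}(ℚ₂), where S_{a,b}(ℚ₂) = {2x₁ ∈ ℚ₂ | ∃x₂,x₃,x₄ ∈ ℚ₂ : x₁² − ax₂² − bx₃² + abx₄² = 1}. -/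
/-!
Scaling a pure quaternion `x₂i + x₃j + x₄ij` of norm `-3` by `s` and adding `x₁` gives norm
`x₁² - 3s²`. For `y = 4 + 8z` take `x₁ = y / 2 = 2 + 4z`; then `(3s)² = 9 + 48(z + z²)` lies in
`1 + 8ℤ₂`, so `s` exists by Hensel's lemma. It remains to represent `-3` by
`-aX² - bY² + abZ²` over `ℚ`, which is done by an explicit witness for each pair.
-/

/-- `S_{a,b}(ℚ₂)`: the set of traces of norm-one elements of `H_{a,b}` over `ℚ₂`. -/
def SsetQ2 (a b : ℚ_[2]) : Set ℚ_[2] :=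
  {y : ℚ_[2] | ∃ x₁ x₂ x₃ x₄ : ℚ_[2], y = 2 * x₁ ∧
    x₁ ^ 2 - a * x₂ ^ 2 - b * x₃ ^ 2 + a * b * x₄ ^ 2 = 1}

@[simp, norm_cast]
theorem PadicInt.coe_ofNat {p : ℕ} [Fact p.Prime] (n : ℕ) [n.AtLeastTwo] :
    ((no_index (OfNat.ofNat n) : ℤ_[p]) : ℚ_[p]) = OfNat.ofNat n :=
  map_ofNat PadicInt.Coe.ringHom n

open Polynomial in
theorem PadicInt.exists_sq_eq_one_add_eight_mul (w : ℤ_[2]) :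
    ∃ s : ℤ_[2], s ^ 2 = 1 + 8 * w := by
  set F : ℤ_[2][X] := X ^ 2 - C (1 + 8 * w)
  have hF : F.aeval (1 : ℤ_[2]) = -(2 ^ 3 * w) := by norm_num [F]
  have hF' : F.derivative.aeval (1 : ℤ_[2]) = 2 := by norm_num [F]
  have h2 : ‖(2 : ℤ_[2])‖ = 2⁻¹ := by simpa using PadicInt.norm_p (p := 2)
  have hnorm : ‖F.aeval (1 : ℤ_[2])‖ < ‖F.derivative.aeval (1 : ℤ_[2])‖ ^ 2 :=
    calc ‖F.aeval (1 : ℤ_[2])‖ = 2⁻¹ ^ 3 * ‖w‖ := by rw [hF, norm_neg, norm_mul, norm_pow, h2]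
      _ ≤ 2⁻¹ ^ 3 := mul_le_of_le_one_right (by positivity) w.norm_le_one
      _ < ‖F.derivative.aeval (1 : ℤ_[2])‖ ^ 2 := by rw [hF', h2]; norm_num
  obtain ⟨s, hs, -⟩ := hensels_lemma hnorm
  exact ⟨s, by simpa [F, sub_eq_zero] using hs⟩

section SsetQ2

variable {a b : ℚ_[2]}

theorem two_mul_mem_SsetQ2 {r₂ r₃ r₄ q x₁ s : ℚ_[2]}
    (hq : -(a * r₂ ^ 2) - b * r₃ ^ 2 + a * b * r₄ ^ 2 = q) (hs : x₁ ^ 2 + q * s ^ 2 = 1) :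
    2 * x₁ ∈ SsetQ2 a b :=
  ⟨x₁, r₂ * s, r₃ * s, r₄ * s, rfl, by rw [← hs, ← hq]; ring⟩

theorem four_add_eight_mul_mem_SsetQ2 (r₂ r₃ r₄ : ℚ_[2])
    (h : -(a * r₂ ^ 2) - b * r₃ ^ 2 + a * b * r₄ ^ 2 = -3) (z : ℤ_[2]) :
    4 + 8 * (z : ℚ_[2]) ∈ SsetQ2 a b := by
  obtain ⟨t, ht⟩ := PadicInt.exists_sq_eq_one_add_eight_mul (1 + 6 * (z + z ^ 2))
  have ht' : (t : ℚ_[2]) ^ 2 = 1 + 8 * (1 + 6 * (z + z ^ 2)) := by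
    simpa using congrArg ((↑) : ℤ_[2] → ℚ_[2]) ht
  have hx₁ : (4 + 8 * z : ℚ_[2]) = 2 * (2 + 4 * z) := by ring
  rw [hx₁]
  refine two_mul_mem_SsetQ2 (s := t / 3) h ?_
  linear_combination (-1 / 3 : ℚ_[2]) * ht'

end SsetQ2

/-- For each of the sixteen listed pairs `(a,b)`, one has `4 + 8ℤ₂ ⊆ S_{a,b}(ℚ₂)`. -/
theorem four_add_eight_subset :
    ∀ ab ∈ ([(2, 3), (2, 5), (2, 6), (2, 10), (3, 3), (3, 10), (3, 15), (5, 6), (5, 10),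
        (5, 30), (6, 6), (6, 15), (10, 30), (15, 15), (15, 30), (30, 30)] :
        List (ℚ_[2] × ℚ_[2])),
      ∀ z : ℤ_[2], (4 + 8 * (z : ℚ_[2])) ∈ SsetQ2 ab.1 ab.2 := by
  intro ab hab
  fin_cases hab
  · exact four_add_eight_mul_mem_SsetQ2 0 3 2 (by norm_num)
  · exact four_add_eight_mul_mem_SsetQ2 2 1 1 (by norm_num)
  · exact four_add_eight_mul_mem_SsetQ2 0 5 (7 / 2) (by norm_num)
  · exact four_add_eight_mul_mem_SsetQ2 (1 / 2) (3 / 2) 1 (by norm_num)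
  · exact four_add_eight_mul_mem_SsetQ2 0 2 1 (by norm_num)
  · exact four_add_eight_mul_mem_SsetQ2 1 0 0 (by norm_num)
  · exact four_add_eight_mul_mem_SsetQ2 1 0 0 (by norm_num)
  · exact four_add_eight_mul_mem_SsetQ2 (3 / 5) 1 (2 / 5) (by norm_num)
  · exact four_add_eight_mul_mem_SsetQ2 1 4 (9 / 5) (by norm_num)
  · exact four_add_eight_mul_mem_SsetQ2 (3 / 5) (9 / 5) (4 / 5) (by norm_num)
  · exact four_add_eight_mul_mem_SsetQ2 (1 / 2) (5 / 2) 1 (by norm_num)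
  · exact four_add_eight_mul_mem_SsetQ2 1 (17 / 5) (7 / 5) (by norm_num)
  · exact four_add_eight_mul_mem_SsetQ2 0 1 (3 / 10) (by norm_num)
  · exact four_add_eight_mul_mem_SsetQ2 (1 / 5) (8 / 5) (2 / 5) (by norm_num)
  · exact four_add_eight_mul_mem_SsetQ2 3 5 (7 / 5) (by norm_num)
  · exact four_add_eight_mul_mem_SsetQ2 (1 / 10) (33 / 10) (3 / 5) (by norm_num)
end
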